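/- For 0 < c_e < c_* and 0 < m < R₀·ϑ·c_e·ρ(c_e²), the function φ ↦ A⁻¹(A(c_e) − ϑ(ζ̂ − φ)/m), with ζ̂ = m(A(c_e) − A(c_m))/ϑ and c_m the root of R₀ϑ c_m ρ(c_m²) = m, is the unique solution of the ODE problem: (d²/dφ²)A(q̂(φ)) = 0 on (0, ζ̂), (d/dφ)A(q̂)(0) = 1/(R₀ q̂(0) ρ(q̂²(0))), q̂(ζ̂) = c_e, together with the mass-flux condition m/(q̂(0)ρ(q̂²(0))) = R₀ϑ, where ζ̂ > 0 is also an unknown. -/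

import Mathlib

/-!
On the subsonic range `(0, c_*)` the integrand `(ρ + 2s²ρ')/(sρ²)` of `A` is positive, so `A` is
continuous and strictly increasing there, and `A⁻¹` inverts it on the open interval `A((0, c_*))`.
The ODE says that `A ∘ q̂` is affine on `[0, ζ̂]`. Since the mass flux `s ρ(s²)` is strictly
increasing on `[0, c_*]`, the flux condition forces `q̂(0) = c_m`, which fixes the initial value
`A(c_m)` and the slope `1/(R₀ c_m ρ(c_m²)) = ϑ/m`; then `q̂(ζ̂) = c_e` determines `ζ̂`.
Conversely, `A ∘ A⁻¹` is the identity on an open set, so the explicit formula makes `A ∘ q̂`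
coincide with the affine function near `[0, ζ̂]`.
-/

open Set

/-- Bernoulli density as a function of `t = q²`. -/
noncomputable def rho (γ t : ℝ) : ℝ := (1 - (γ - 1) / 2 * t) ^ ((1 : ℝ) / (γ - 1))

/-- Critical (sonic) speed. -/
noncomputable def cstar (γ : ℝ) : ℝ := Real.sqrt (2 / (γ + 1))

/-- `A(q) = ∫_{c_*}^q (ρ(s²) + 2s²ρ'(s²))/(s ρ²(s²)) ds`. -/
noncomputable def Afun (γ q : ℝ) : ℝ :=
  ∫ s in (cstar γ)..q,
    (rho γ (s ^ 2) + 2 * s ^ 2 * deriv (rho γ) (s ^ 2)) / (s * (rho γ (s ^ 2)) ^ 2)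

/-- `A⁻¹` : the inverse of `A` restricted to `(0, c_*)`. -/
noncomputable def Ainv (γ : ℝ) : ℝ → ℝ := Function.invFunOn (Afun γ) (Ioo 0 (cstar γ))

/-- Solutions of the symmetric ODE free boundary problem
`(A(q̂))'' = 0` on `(0,ζ)`, `(A(q̂))'(0) = 1/(R₀ q̂(0) ρ(q̂²(0)))`, `q̂(ζ) = c_e`,
with the mass-flux condition `m/(q̂(0)ρ(q̂²(0))) = R₀ϑ`. -/
def IsSymSol (γ R₀ ϑ c_e m : ℝ) (ζ : ℝ) (q : ℝ → ℝ) : Prop :=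
  0 < ζ ∧
  (∀ φ ∈ Icc (0 : ℝ) ζ, q φ ∈ Ioo (0 : ℝ) (cstar γ)) ∧
  (∀ φ ∈ Icc (0 : ℝ) ζ, DifferentiableAt ℝ (fun x => Afun γ (q x)) φ ∧
    DifferentiableAt ℝ (deriv (fun x => Afun γ (q x))) φ) ∧
  (∀ φ ∈ Ioo (0 : ℝ) ζ, deriv (deriv (fun x => Afun γ (q x))) φ = 0) ∧
  deriv (fun x => Afun γ (q x)) 0 = 1 / (R₀ * q 0 * rho γ ((q 0) ^ 2)) ∧
  q ζ = c_e ∧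
  m / (q 0 * rho γ ((q 0) ^ 2)) = R₀ * ϑ

lemma eq_add_mul_sub_of_deriv_eq {f : ℝ → ℝ} {a b k : ℝ} (hf : ContinuousOn f (Icc a b))
    (hfd : DifferentiableOn ℝ f (Ioo a b)) (hk : ∀ x ∈ Ioo a b, deriv f x = k) :
    ∀ x ∈ Icc a b, f x = f a + k * (x - a) := by
  rintro x ⟨hax, hxb⟩
  rcases hax.eq_or_lt with rfl | hax
  · ring
  obtain ⟨c, hc, hslope⟩ := exists_deriv_eq_slope f hax (hf.mono (Icc_subset_Icc_right hxb))
    (hfd.mono (Ioo_subset_Ioo_right hxb))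
  rw [hk c ⟨hc.1, hc.2.trans_le hxb⟩, eq_div_iff (sub_pos.mpr hax).ne'] at hslope
  linarith

section Nozzle

variable {γ : ℝ}

lemma one_sub_mul_pos (hγ : 1 < γ) {t : ℝ} (ht : t < 2 / (γ - 1)) :
    0 < 1 - (γ - 1) / 2 * t := by
  have := (lt_div_iff₀ (by linarith : (0 : ℝ) < γ - 1)).mp ht
  linarith

lemma rho_pos (hγ : 1 < γ) {t : ℝ} (ht : t < 2 / (γ - 1)) : 0 < rho γ t :=
  Real.rpow_pos_of_pos (one_sub_mul_pos hγ ht) _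

lemma contDiffOn_rho (hγ : 1 < γ) : ContDiffOn ℝ ⊤ (rho γ) (Iio (2 / (γ - 1))) :=
  (contDiffOn_const.sub (contDiffOn_const.mul contDiffOn_id)).rpow_const_of_ne
    fun _ ht => (one_sub_mul_pos hγ ht).ne'

lemma hasDerivAt_rho (hγ : 1 < γ) {t : ℝ} (ht : t < 2 / (γ - 1)) :
    HasDerivAt (rho γ) (-(1 / 2) * (1 - (γ - 1) / 2 * t) ^ (1 / (γ - 1) - 1)) t := by
  have hbase : HasDerivAt (fun t : ℝ => 1 - (γ - 1) / 2 * t) (-((γ - 1) / 2)) t := by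
    simpa using ((hasDerivAt_id t).const_mul ((γ - 1) / 2)).const_sub 1
  convert hbase.rpow_const (p := 1 / (γ - 1)) (Or.inl (one_sub_mul_pos hγ ht).ne') using 1
  · rfl
  · field_simp [show γ - 1 ≠ 0 by linarith]

/-- `ρ(t) + 2tρ'(t) = (1 - (γ+1)t/2) (1 - (γ-1)t/2)^{1/(γ-1) - 1}` vanishes at `t = c_*²`. -/
lemma rho_add_two_mul_deriv_rho_pos (hγ : 1 < γ) {t : ℝ} (ht : t < 2 / (γ + 1)) :
    0 < rho γ t + 2 * t * deriv (rho γ) t := by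
  have ht' : t < 2 / (γ - 1) :=
    ht.trans (div_lt_div_of_pos_left two_pos (by linarith) (by linarith))
  have hb := one_sub_mul_pos hγ ht'
  have hsonic : 0 < 1 - (γ + 1) / 2 * t := by
    have := (lt_div_iff₀ (by linarith : (0 : ℝ) < γ + 1)).mp ht
    linarith
  have hsplit : rho γ t = (1 - (γ - 1) / 2 * t) ^ (1 / (γ - 1) - 1) * (1 - (γ - 1) / 2 * t) := by
    rw [rho, ← Real.rpow_add_one hb.ne', sub_add_cancel]
  rw [(hasDerivAt_rho hγ ht').deriv, hsplit]
  have : 0 < (1 - (γ - 1) / 2 * t) ^ (1 / (γ - 1) - 1) := Real.rpow_pos_of_pos hb _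
  nlinarith

lemma cstar_pos (hγ : 1 < γ) : 0 < cstar γ :=
  Real.sqrt_pos.mpr (by positivity)

lemma sq_lt_two_div_add_one (hγ : 1 < γ) {s : ℝ} (hs : s ∈ Ioo 0 (cstar γ)) :
    s ^ 2 < 2 / (γ + 1) := by
  rw [← Real.sq_sqrt (by positivity : (0 : ℝ) ≤ 2 / (γ + 1))]
  exact pow_lt_pow_left₀ hs.2 hs.1.le two_ne_zero

lemma sq_lt_two_div_sub_one (hγ : 1 < γ) {s : ℝ} (hs : s ∈ Icc 0 (cstar γ)) :
    s ^ 2 < 2 / (γ - 1) := calc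
  s ^ 2 ≤ cstar γ ^ 2 := pow_le_pow_left₀ hs.1 hs.2 2
  _ = 2 / (γ + 1) := Real.sq_sqrt (by positivity)
  _ < 2 / (γ - 1) := div_lt_div_of_pos_left two_pos (by linarith) (by linarith)

lemma strictMonoOn_mul_rho (hγ : 1 < γ) :
    StrictMonoOn (fun s => s * rho γ (s ^ 2)) (Icc 0 (cstar γ)) := by
  have hsq : MapsTo (fun s : ℝ => s ^ 2) (Icc 0 (cstar γ)) (Iio (2 / (γ - 1))) :=
    fun s hs => sq_lt_two_div_sub_one hγ hs
  refine strictMonoOn_of_deriv_pos (convex_Icc _ _) ?_ fun s hs => ?_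
  · exact continuousOn_id.mul
      ((contDiffOn_rho hγ).continuousOn.comp (continuousOn_pow 2) hsq)
  · rw [interior_Icc] at hs
    have hρ : HasDerivAt (rho γ) (deriv (rho γ) (s ^ 2)) (s ^ 2) :=
      ((contDiffOn_rho hγ).differentiableOn (by simp) _ (hsq (Ioo_subset_Icc_self hs))
        |>.differentiableAt (isOpen_Iio.mem_nhds (hsq (Ioo_subset_Icc_self hs)))).hasDerivAt
    have hflux : HasDerivAt (fun s => s * rho γ (s ^ 2))
        (rho γ (s ^ 2) + 2 * s ^ 2 * deriv (rho γ) (s ^ 2)) s :=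
      ((hasDerivAt_id' s).mul (hρ.comp (h := fun x : ℝ => x ^ 2) s (hasDerivAt_pow 2 s)))
        |>.congr_deriv (by simp only [Function.comp_apply]; ring)
    rw [hflux.deriv]
    exact rho_add_two_mul_deriv_rho_pos hγ (sq_lt_two_div_add_one hγ hs)

noncomputable def Aintegrand (γ s : ℝ) : ℝ :=
  (rho γ (s ^ 2) + 2 * s ^ 2 * deriv (rho γ) (s ^ 2)) / (s * (rho γ (s ^ 2)) ^ 2)

lemma Afun_eq_integral_Aintegrand (q : ℝ) : Afun γ q = ∫ s in (cstar γ)..q, Aintegrand γ s := rfl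

lemma Aintegrand_pos (hγ : 1 < γ) {s : ℝ} (hs : s ∈ Ioo 0 (cstar γ)) : 0 < Aintegrand γ s := by
  have hρ := rho_pos hγ (sq_lt_two_div_sub_one hγ (Ioo_subset_Icc_self hs))
  have := hs.1
  exact div_pos (rho_add_two_mul_deriv_rho_pos hγ (sq_lt_two_div_add_one hγ hs)) (by positivity)

lemma continuousOn_Aintegrand (hγ : 1 < γ) : ContinuousOn (Aintegrand γ) (Ioc 0 (cstar γ)) := by
  have hsq : MapsTo (fun s : ℝ => s ^ 2) (Ioc 0 (cstar γ)) (Iio (2 / (γ - 1))) :=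
    fun s hs => sq_lt_two_div_sub_one hγ (Ioc_subset_Icc_self hs)
  have hρ := (contDiffOn_rho hγ).continuousOn.comp (continuousOn_pow 2) hsq
  have hρ' := ((contDiffOn_rho hγ).continuousOn_deriv_of_isOpen isOpen_Iio (by simp)).comp
    (continuousOn_pow 2) hsq
  refine (hρ.add ((continuousOn_const.mul (continuousOn_pow 2)).mul hρ')).div
    (continuousOn_id.mul (hρ.pow 2)) fun s hs => ?_
  have := rho_pos hγ (hsq hs)
  have := hs.1
  positivity

lemma intervalIntegrable_Aintegrand (hγ : 1 < γ) {a b : ℝ} (ha : a ∈ Ioc 0 (cstar γ))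
    (hb : b ∈ Ioc 0 (cstar γ)) : IntervalIntegrable (Aintegrand γ) MeasureTheory.volume a b :=
  ((continuousOn_Aintegrand hγ).mono (ordConnected_Ioc.uIcc_subset ha hb)).intervalIntegrable

lemma Afun_sub_Afun (hγ : 1 < γ) {a b : ℝ} (ha : a ∈ Ioc 0 (cstar γ))
    (hb : b ∈ Ioc 0 (cstar γ)) : Afun γ b - Afun γ a = ∫ s in a..b, Aintegrand γ s := by
  have hc : cstar γ ∈ Ioc 0 (cstar γ) := ⟨cstar_pos hγ, le_rfl⟩
  rw [Afun_eq_integral_Aintegrand, Afun_eq_integral_Aintegrand]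
  exact intervalIntegral.integral_interval_sub_left
    (intervalIntegrable_Aintegrand hγ hc hb) (intervalIntegrable_Aintegrand hγ hc ha)

lemma strictMonoOn_Afun (hγ : 1 < γ) : StrictMonoOn (Afun γ) (Ioc 0 (cstar γ)) := by
  intro a ha b hb hab
  have hpos := intervalIntegral.intervalIntegral_pos_of_pos_on
    (intervalIntegrable_Aintegrand hγ ha hb)
    (fun s hs => Aintegrand_pos hγ ⟨ha.1.trans hs.1, hs.2.trans_le hb.2⟩) hab
  linarith [Afun_sub_Afun hγ ha hb]

lemma continuousOn_Afun (hγ : 1 < γ) {a : ℝ} (ha : 0 < a) :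
    ContinuousOn (Afun γ) (Icc a (cstar γ)) := by
  rcases le_or_gt a (cstar γ) with hac | hac
  · have hint := intervalIntegrable_Aintegrand hγ ⟨ha, hac⟩ ⟨cstar_pos hγ, le_rfl⟩
    rw [← uIcc_of_le hac]
    exact intervalIntegral.continuousOn_primitive_interval' hint right_mem_uIcc
  · simp [Icc_eq_empty_of_lt hac]

lemma Ainv_Afun (hγ : 1 < γ) {x : ℝ} (hx : x ∈ Ioo 0 (cstar γ)) : Ainv γ (Afun γ x) = x :=
  ((strictMonoOn_Afun hγ).injOn.mono Ioo_subset_Ioc_self).leftInvOn_invFunOn hx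

lemma Afun_Ainv {v : ℝ} (hv : v ∈ Afun γ '' Ioo 0 (cstar γ)) : Afun γ (Ainv γ v) = v :=
  Function.invFunOn_eq hv

lemma Ainv_mem_Ioo {v : ℝ} (hv : v ∈ Afun γ '' Ioo 0 (cstar γ)) : Ainv γ v ∈ Ioo 0 (cstar γ) :=
  Function.invFunOn_mem hv

lemma Icc_subset_image_Afun (hγ : 1 < γ) {a b : ℝ} (ha : 0 < a) (hab : a ≤ b)
    (hb : b < cstar γ) : Icc (Afun γ a) (Afun γ b) ⊆ Afun γ '' Ioo 0 (cstar γ) := by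
  have hcont := (continuousOn_Afun hγ ha).mono (Icc_subset_Icc_right hb.le)
  exact (intermediate_value_Icc hab hcont).trans (image_mono (Icc_subset_Ioo ha hb))

lemma isOpen_image_Afun (hγ : 1 < γ) : IsOpen (Afun γ '' Ioo 0 (cstar γ)) := by
  rw [isOpen_iff_forall_mem_open]
  rintro _ ⟨x, hx, rfl⟩
  have hlo : x / 2 ∈ Ioc 0 (cstar γ) := ⟨by linarith [hx.1], by linarith [hx.1, hx.2]⟩
  have hhi : (x + cstar γ) / 2 ∈ Ioc 0 (cstar γ) := ⟨by linarith [hx.1, hx.2], by linarith [hx.2]⟩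
  have hmono := strictMonoOn_Afun hγ
  refine ⟨Ioo (Afun γ (x / 2)) (Afun γ ((x + cstar γ) / 2)), ?_, isOpen_Ioo, ?_, ?_⟩
  · exact Ioo_subset_Icc_self.trans (Icc_subset_image_Afun hγ hlo.1
      (by linarith [hx.1, hx.2]) (by linarith [hx.2]))
  · exact hmono hlo (Ioo_subset_Ioc_self hx) (by linarith [hx.1])
  · exact hmono (Ioo_subset_Ioc_self hx) hhi (by linarith [hx.2])

lemma eventuallyEq_Afun_Ainv (hγ : 1 < γ) {v : ℝ} (hv : v ∈ Afun γ '' Ioo 0 (cstar γ)) :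
    (fun w => Afun γ (Ainv γ w)) =ᶠ[nhds v] id :=
  Filter.eventuallyEq_of_mem ((isOpen_image_Afun hγ).mem_nhds hv) fun _ hw => Afun_Ainv hw

end Nozzle

section SymmetricProblem

variable {γ R₀ ϑ c_e m c_m : ℝ}

lemma div_eq_one_div_of_flux (hm : m ≠ 0) (hflux : R₀ * ϑ * c_m * rho γ (c_m ^ 2) = m) :
    ϑ / m = 1 / (R₀ * c_m * rho γ (c_m ^ 2)) := by
  have hϑ : ϑ ≠ 0 := fun h => hm (by rw [← hflux, h]; ring)
  rw [← hflux, show R₀ * ϑ * c_m * rho γ (c_m ^ 2) = ϑ * (R₀ * c_m * rho γ (c_m ^ 2)) by ring,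
    div_mul_cancel_left₀ hϑ, one_div]

theorem isSymSol_Ainv (hγ : 1 < γ) (hϑ : 0 < ϑ) (hce : c_e ∈ Ioo 0 (cstar γ)) (hm : 0 < m)
    (hcm : c_m ∈ Ioo 0 c_e) (hflux : R₀ * ϑ * c_m * rho γ (c_m ^ 2) = m) :
    IsSymSol γ R₀ ϑ c_e m (m * (Afun γ c_e - Afun γ c_m) / ϑ)
      (fun φ => Ainv γ (Afun γ c_e - ϑ * (m * (Afun γ c_e - Afun γ c_m) / ϑ - φ) / m)) := by
  set ζ := m * (Afun γ c_e - Afun γ c_m) / ϑ with hζ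
  set L : ℝ → ℝ := fun φ => Afun γ c_e - ϑ * (ζ - φ) / m with hL
  show IsSymSol γ R₀ ϑ c_e m ζ (fun φ => Ainv γ (L φ))
  have hcm' : c_m ∈ Ioo 0 (cstar γ) := ⟨hcm.1, hcm.2.trans hce.2⟩
  have hζpos : 0 < ζ := div_pos (mul_pos hm (sub_pos.mpr (strictMonoOn_Afun hγ
    (Ioo_subset_Ioc_self hcm') (Ioo_subset_Ioc_self hce) hcm.2))) hϑ
  have hL_eq : ∀ φ, L φ = Afun γ c_m + ϑ / m * φ := fun φ => by
    simp only [hL, hζ]; field_simp; ring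
  have hLderiv : ∀ φ, HasDerivAt L (ϑ / m) φ := fun φ => by
    rw [show L = fun φ => Afun γ c_m + ϑ / m * φ from funext hL_eq]
    simpa using ((hasDerivAt_id φ).const_mul (ϑ / m)).const_add (Afun γ c_m)
  have hL_mem : ∀ φ ∈ Icc 0 ζ, L φ ∈ Afun γ '' Ioo 0 (cstar γ) := fun φ hφ => by
    refine Icc_subset_image_Afun hγ hcm.1 hcm.2.le hce.2 ⟨?_, ?_⟩
    · rw [hL_eq]
      nlinarith [div_pos hϑ hm, hφ.1]
    · have : 0 ≤ ϑ * (ζ - φ) / m := by have := hφ.2; positivity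
      simp only [hL]
      linarith
  have hAQ : ∀ φ ∈ Icc 0 ζ, (fun x => Afun γ (Ainv γ (L x))) =ᶠ[nhds φ] L := fun φ hφ =>
    (eventuallyEq_Afun_Ainv hγ (hL_mem φ hφ)).comp_tendsto (hLderiv φ).continuousAt
  have hAQ' : ∀ φ ∈ Icc 0 ζ,
      deriv (fun x => Afun γ (Ainv γ (L x))) =ᶠ[nhds φ] fun _ => ϑ / m := fun φ hφ =>
    (hAQ φ hφ).eventuallyEq_nhds.mono fun x hx => hx.deriv_eq.trans (hLderiv x).deriv
  have hQ0 : Ainv γ (L 0) = c_m := by rw [hL_eq, mul_zero, add_zero, Ainv_Afun hγ hcm']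
  have hρ := rho_pos hγ (sq_lt_two_div_sub_one hγ (Ioo_subset_Icc_self hcm'))
  refine ⟨hζpos, fun φ hφ => Ainv_mem_Ioo (hL_mem φ hφ), fun φ hφ => ⟨?_, ?_⟩, fun φ hφ => ?_,
    ?_, ?_, ?_⟩
  · exact (hAQ φ hφ).differentiableAt_iff.mpr (hLderiv φ).differentiableAt
  · exact (hAQ' φ hφ).differentiableAt_iff.mpr (differentiableAt_const _)
  · rw [(hAQ' φ (Ioo_subset_Icc_self hφ)).deriv_eq, deriv_const]
  · beta_reduce
    rw [(hAQ 0 ⟨le_rfl, hζpos.le⟩).deriv_eq, (hLderiv 0).deriv, hQ0]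
    exact div_eq_one_div_of_flux hm.ne' hflux
  · simp only [hL, sub_self, mul_zero, zero_div, sub_zero]
    exact Ainv_Afun hγ hce
  · beta_reduce
    rw [hQ0, ← hflux]
    field_simp [hcm.1.ne', hρ.ne']

theorem IsSymSol.eq_of_flux (hγ : 1 < γ) (hm : m ≠ 0) (hcm : c_m ∈ Icc 0 c_e)
    (hflux : R₀ * ϑ * c_m * rho γ (c_m ^ 2) = m) {ζ : ℝ} {q : ℝ → ℝ}
    (h : IsSymSol γ R₀ ϑ c_e m ζ q) : q 0 = c_m := by
  obtain ⟨hζ, hq, -, -, -, hqζ, hflux_q⟩ := h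
  have hq0 := hq 0 ⟨le_rfl, hζ.le⟩
  have hcm' : c_m ∈ Icc 0 (cstar γ) := ⟨hcm.1, hcm.2.trans (hqζ ▸ hq ζ ⟨hζ.le, le_rfl⟩).2.le⟩
  have hR₀ϑ : R₀ * ϑ ≠ 0 := fun h0 => hm (by rw [← hflux, h0, zero_mul, zero_mul])
  rw [div_eq_iff (mul_pos hq0.1 (rho_pos hγ (sq_lt_two_div_sub_one hγ
    (Ioo_subset_Icc_self hq0)))).ne'] at hflux_q
  refine (strictMonoOn_mul_rho hγ).injOn (Ioo_subset_Icc_self hq0) hcm' ?_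
  exact mul_left_cancel₀ hR₀ϑ (by linear_combination hflux_q.symm - hflux)

theorem IsSymSol.Afun_eq (hγ : 1 < γ) (hm : m ≠ 0) (hcm : c_m ∈ Icc 0 c_e)
    (hflux : R₀ * ϑ * c_m * rho γ (c_m ^ 2) = m) {ζ : ℝ} {q : ℝ → ℝ}
    (h : IsSymSol γ R₀ ϑ c_e m ζ q) :
    ∀ x ∈ Icc 0 ζ, Afun γ (q x) = Afun γ c_m + ϑ / m * x := by
  have hq0 := h.eq_of_flux hγ hm hcm hflux
  obtain ⟨-, -, hdiff, hdd, hd0, -, -⟩ := h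
  set f := fun x => Afun γ (q x)
  have hslope : deriv f 0 = ϑ / m := by
    rw [hd0, hq0]
    exact (div_eq_one_div_of_flux hm hflux).symm
  have hderiv : ∀ x ∈ Icc 0 ζ, deriv f x = ϑ / m := fun x hx => by
    rw [eq_add_mul_sub_of_deriv_eq (f := deriv f) (k := 0)
      (fun y hy => (hdiff y hy).2.continuousAt.continuousWithinAt)
      (fun y hy => (hdiff y (Ioo_subset_Icc_self hy)).2.differentiableWithinAt) hdd x hx,
      hslope, zero_mul, add_zero]
  intro x hx
  change f x = _
  rw [eq_add_mul_sub_of_deriv_eq (f := f) (k := ϑ / m)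
    (fun y hy => (hdiff y hy).1.continuousAt.continuousWithinAt)
    (fun y hy => (hdiff y (Ioo_subset_Icc_self hy)).1.differentiableWithinAt)
    (fun y hy => hderiv y (Ioo_subset_Icc_self hy)) x hx, sub_zero]
  simp only [f, hq0]

theorem IsSymSol.eq_Ainv (hγ : 1 < γ) (hϑ : ϑ ≠ 0) (hm : m ≠ 0) (hcm : c_m ∈ Icc 0 c_e)
    (hflux : R₀ * ϑ * c_m * rho γ (c_m ^ 2) = m) {ζ : ℝ} {q : ℝ → ℝ}
    (h : IsSymSol γ R₀ ϑ c_e m ζ q) :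
    ζ = m * (Afun γ c_e - Afun γ c_m) / ϑ ∧
      ∀ φ ∈ Icc (0 : ℝ) ζ,
        q φ = Ainv γ (Afun γ c_e - ϑ * (m * (Afun γ c_e - Afun γ c_m) / ϑ - φ) / m) := by
  have haffine := h.Afun_eq hγ hm hcm hflux
  obtain ⟨hζ, hq, -, -, -, hqζ, -⟩ := h
  have hζeq : ζ = m * (Afun γ c_e - Afun γ c_m) / ϑ := by
    have := haffine ζ ⟨hζ.le, le_rfl⟩
    rw [hqζ] at this
    rw [this]
    field_simp
    ring
  refine ⟨hζeq, fun φ hφ => ?_⟩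
  rw [← hζeq, ← Ainv_Afun hγ (hq φ hφ), haffine φ hφ, hζeq]
  congr 1
  field_simp
  ring

end SymmetricProblem

theorem stmt_8_general (γ R₀ ϑ c_e m c_m : ℝ) (hγ : 1 < γ)
    (hϑ : ϑ ∈ Ioo (0 : ℝ) (Real.pi / 2))
    (hce : c_e ∈ Ioo (0 : ℝ) (cstar γ))
    (hm : 0 < m)
    (hcm : c_m ∈ Ioo (0 : ℝ) c_e ∧ R₀ * ϑ * c_m * rho γ (c_m ^ 2) = m) :
    IsSymSol γ R₀ ϑ c_e m (m * (Afun γ c_e - Afun γ c_m) / ϑ)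
      (fun φ => Ainv γ (Afun γ c_e - ϑ * (m * (Afun γ c_e - Afun γ c_m) / ϑ - φ) / m)) ∧
    (∀ ζ : ℝ, ∀ q : ℝ → ℝ, IsSymSol γ R₀ ϑ c_e m ζ q →
      ζ = m * (Afun γ c_e - Afun γ c_m) / ϑ ∧
      ∀ φ ∈ Icc (0 : ℝ) ζ,
        q φ = Ainv γ (Afun γ c_e - ϑ * (m * (Afun γ c_e - Afun γ c_m) / ϑ - φ) / m)) :=
  ⟨isSymSol_Ainv hγ hϑ.1 hce hm hcm.1 hcm.2,
    fun _ _ h => h.eq_Ainv hγ hϑ.1.ne' hm.ne' (Ioo_subset_Icc_self hcm.1) hcm.2⟩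

/-- For `0 < c_e < c_*` and `0 < m < R₀ϑ c_e ρ(c_e²)`, the function
`φ ↦ A⁻¹(A(c_e) − ϑ(ζ̂ − φ)/m)` with `ζ̂ = m(A(c_e) − A(c_m))/ϑ` is the unique
solution of the symmetric ODE problem, `ζ̂` being the (unique) free boundary. -/
theorem stmt_8 (γ R₀ ϑ c_e m c_m : ℝ) (hγ : 1 < γ) (hR₀ : 0 < R₀)
    (hϑ : ϑ ∈ Ioo (0 : ℝ) (Real.pi / 2))
    (hce : c_e ∈ Ioo (0 : ℝ) (cstar γ))
    (hm : 0 < m) (hm' : m < R₀ * ϑ * c_e * rho γ (c_e ^ 2))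
    (hcm : c_m ∈ Ioo (0 : ℝ) c_e ∧ R₀ * ϑ * c_m * rho γ (c_m ^ 2) = m) :
    IsSymSol γ R₀ ϑ c_e m (m * (Afun γ c_e - Afun γ c_m) / ϑ)
      (fun φ => Ainv γ (Afun γ c_e - ϑ * (m * (Afun γ c_e - Afun γ c_m) / ϑ - φ) / m)) ∧
    (∀ ζ : ℝ, ∀ q : ℝ → ℝ, IsSymSol γ R₀ ϑ c_e m ζ q →
      ζ = m * (Afun γ c_e - Afun γ c_m) / ϑ ∧
      ∀ φ ∈ Icc (0 : ℝ) ζ,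
        q φ = Ainv γ (Afun γ c_e - ϑ * (m * (Afun γ c_e - Afun γ c_m) / ϑ - φ) / m)) :=
  stmt_8_general γ R₀ ϑ c_e m c_m hγ hϑ hce hm hcm
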